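/- For real s > 0, 0 ≤ q < 1 and 0 < ρ < 1 − q, the roots U⁻(s), U⁺(s) of P(s,·) satisfy the strict inequalities q < U⁻(s) < 1 < U⁺(s). -/

import Mathlib

/-!
Write `P(u) = u² − A u + B` with `A = s+1+ρ+q` and `B = sq+ρ+q`; then `Δ(s) = A² − 4B`.
One computes `P(1) = −s(1−q) < 0`, so `1` lies strictly between the roots, and
`P(q) = ρ(1−q) > 0` with `q` left of the vertex `A/2`, so `q` lies strictly left of both roots.
-/

namespace Quadratic

variable {A B x : ℝ}

theorem between_roots_of_neg (h : x ^ 2 - A * x + B < 0) :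
    (A - √(A ^ 2 - 4 * B)) / 2 < x ∧ x < (A + √(A ^ 2 - 4 * B)) / 2 := by
  have hsq : |2 * x - A| ^ 2 < A ^ 2 - 4 * B := by rw [sq_abs]; nlinarith
  have habs : |2 * x - A| < √(A ^ 2 - 4 * B) := (Real.lt_sqrt (abs_nonneg _)).mpr hsq
  obtain ⟨hlo, hhi⟩ := abs_lt.mp habs
  constructor <;> linarith

theorem lt_smaller_root_of_pos_of_lt_vertex (hx : 2 * x < A) (h : 0 < x ^ 2 - A * x + B) :
    x < (A - √(A ^ 2 - 4 * B)) / 2 := by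
  have hsqrt : √(A ^ 2 - 4 * B) < A - 2 * x :=
    (Real.sqrt_lt' (by linarith)).mpr (by nlinarith)
  linarith

end Quadratic

theorem stmt_1_general (q ρ s : ℝ) (hq1 : q < 1)
    (hρ0 : 0 < ρ) (hs : 0 < s) :
    q < (s+1+ρ+q - Real.sqrt (s^2 + 2*(1+ρ-q)*s + (1-ρ-q)^2))/2 ∧
    (s+1+ρ+q - Real.sqrt (s^2 + 2*(1+ρ-q)*s + (1-ρ-q)^2))/2 < 1 ∧
    1 < (s+1+ρ+q + Real.sqrt (s^2 + 2*(1+ρ-q)*s + (1-ρ-q)^2))/2 := by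
  have hΔ : s^2 + 2*(1+ρ-q)*s + (1-ρ-q)^2 = (s+1+ρ+q) ^ 2 - 4 * (s*q+ρ+q) := by ring
  have hP1 : (1:ℝ) ^ 2 - (s+1+ρ+q) * 1 + (s*q+ρ+q) < 0 := by nlinarith [mul_pos hs (sub_pos.mpr hq1)]
  have hPq : 0 < q ^ 2 - (s+1+ρ+q) * q + (s*q+ρ+q) := by nlinarith [mul_pos hρ0 (sub_pos.mpr hq1)]
  rw [hΔ]
  exact ⟨Quadratic.lt_smaller_root_of_pos_of_lt_vertex (by linarith) hPq, Quadratic.between_roots_of_neg hP1⟩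

/-- For real `s > 0`, `0 ≤ q < 1`, `0 < ρ < 1 − q`, the roots
`U±(s) = (s+1+ρ+q ± √Δ(s))/2` of `P(s,·)` satisfy `q < U⁻(s) < 1 < U⁺(s)`. -/
theorem stmt_1 (q ρ s : ℝ) (hq0 : 0 ≤ q) (hq1 : q < 1)
    (hρ0 : 0 < ρ) (hρ1 : ρ < 1 - q) (hs : 0 < s) :
    q < (s+1+ρ+q - Real.sqrt (s^2 + 2*(1+ρ-q)*s + (1-ρ-q)^2))/2 ∧
    (s+1+ρ+q - Real.sqrt (s^2 + 2*(1+ρ-q)*s + (1-ρ-q)^2))/2 < 1 ∧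
    1 < (s+1+ρ+q + Real.sqrt (s^2 + 2*(1+ρ-q)*s + (1-ρ-q)^2))/2 :=
  stmt_1_general q ρ s hq1 hρ0 hs
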